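/- Consider the iterate-averaging reformulation of SGD with momentum: with $\lambda_t = t/2$ and $Z^{t-1} = W^t + \lambda_t(W^t - W^{t-1})$, the SGD-M recursion $M^t = \frac{t}{t+2} M^{t-1} + \nabla \ell_{i_t}(W^t)$, $W^{t+1} = W^t - \frac{2\eta}{t+3} M^t$ with $M^{-1}=0$ implies $Z^t = Z^{t-1} - \eta \nabla \ell_{i_t}(W^t)$ for all $t \geq 0$. -/
import Mathlib


/-- Iterate-averaging reformulation of SGD with momentum: with `λ_t = t/2` and
`Z^{t-1} = W^t + λ_t (W^t - W^{t-1})`, the SGD-M recursion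
`M^t = (t/(t+2)) M^{t-1} + g_t`, `W^{t+1} = W^t - (2η/(t+3)) M^t` with `M^{-1} = 0`
implies `Z^t = Z^{t-1} - η g_t` for all `t ≥ 0`.  (Here `Z t` denotes `Z^{t-1}`,
`M (t+1)` denotes `M^t`, and `g t = ∇ℓ_{i_t}(W^t)` is abstract.) -/
theorem stmt_12 {E : Type*} [NormedAddCommGroup E] [NormedSpace ℝ E]
    (η : ℝ) (g : ℕ → E) (W M Z : ℕ → E)
    (hM0 : M 0 = 0)
    (hMrec : ∀ t, M (t + 1) = ((t : ℝ) / (t + 2)) • M t + g t)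
    (hWrec : ∀ t, W (t + 1) = W t - (2 * η / (t + 3)) • M (t + 1))
    (hZ0 : Z 0 = W 0)
    (hZ : ∀ t, Z (t + 1) = W (t + 1) + (((t + 1 : ℕ) : ℝ) / 2) • (W (t + 1) - W t)) :
    ∀ t, Z (t + 1) = Z t - η • g t := by
  have haux : ∀ t, Z t = W t - ((η * t) / (t + 2)) • M t := by
    intro t
    match t with
    | 0 => simp [hZ0, hM0]
    | (s + 1) =>
      have h3 : ((s : ℝ) + 3) ≠ 0 := by positivity
      rw [hZ, hWrec]
      push_cast
      match_scalars <;> field_simp <;> ring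
  intro t
  have h2 : ((t : ℝ) + 2) ≠ 0 := by positivity
  have h3 : ((t : ℝ) + 3) ≠ 0 := by positivity
  rw [haux, haux, hWrec, hMrec]
  push_cast
  match_scalars <;> field_simp <;> ring
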